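/- Let f ∈ F₁(a,b) and Γ ⊂ M_b(Ω) satisfy: (a) there exists a nonempty set Ψ ⊂ Γ that is P(Ω)-determining and such that for every ψ ∈ Ψ there exist c₀ ∈ ℝ and ε₀ > 0 with c₀ + εψ ∈ Γ for all |ε| < ε₀; (b) f is strictly convex on a neighborhood of 1; and (c) f* is finite and continuously differentiable on a neighborhood of ν₀ := f'₊(1), the right derivative of f at 1. Let P and Q_n (n ∈ ℤ₊) be probability measures on (Ω,M). If D_f^Γ(Q_n‖P) → 0 or D_f^Γ(P‖Q_n) → 0, then E_{Q_n}[ψ] → E_P[ψ] for every ψ ∈ Ψ. -/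

import Mathlib

open MeasureTheory Filter Set Topology ENNReal
open scoped Classical

noncomputable section

/-- The set of bounded measurable real-valued functions on `Ω`. -/
def Mb (Ω : Type*) [MeasurableSpace Ω] : Set (Ω → ℝ) :=
  {g | Measurable g ∧ ∃ C : ℝ, ∀ x, |g x| ≤ C}

/-- The set of bounded continuous real-valued functions on `S`. -/
def Cb (S : Type*) [TopologicalSpace S] : Set (S → ℝ) :=
  {g | Continuous g ∧ ∃ C : ℝ, ∀ x, |g x| ≤ C}

/-- The positive part of an extended real number, as an element of `ℝ≥0∞`. -/
def posE (x : EReal) : ℝ≥0∞ := if x = ⊤ then ⊤ else ENNReal.ofReal x.toReal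

/-- The extended-real-valued integral of an `EReal`-valued function, defined as the
difference of the lower integrals of the positive and negative parts, with the
convention `∞ - ∞ = -∞`. -/
def eIntegral {Ω : Type*} [MeasurableSpace Ω] (P : Measure Ω) (h : Ω → EReal) : EReal :=
  ((∫⁻ x, posE (h x) ∂P : ℝ≥0∞) : EReal) - ((∫⁻ x, posE (-(h x)) ∂P : ℝ≥0∞) : EReal)

/-- The Legendre transform `f*(y) = sup_x {x*y - f(x)}` of `f : ℝ → (-∞,∞]`. -/
def fstar (f : ℝ → EReal) (y : ℝ) : EReal := ⨆ x : ℝ, (((x * y : ℝ) : EReal) - f x)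

/-- `f : ℝ → (-∞,∞]` is (the convex LSC extension of) an element of `F₁(a,b)`:
convex, lower semicontinuous, never `-∞`, finite exactly on the interval `(a,b)`
(with `+∞` strictly outside `[a,b]`), and `f(1) = 0` with `a < 1 < b`. -/
structure IsF1 (a b : EReal) (f : ℝ → EReal) : Prop where
  a_lt_one : a < ((1 : ℝ) : EReal)
  one_lt_b : ((1 : ℝ) : EReal) < b
  convex : ∀ x y t : ℝ, 0 < t → t < 1 →
    f (t * x + (1 - t) * y) ≤ ((t : ℝ) : EReal) * f x + (((1 - t : ℝ)) : EReal) * f y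
  lsc : LowerSemicontinuous f
  ne_bot : ∀ x, f x ≠ ⊥
  finite_on : ∀ x : ℝ, a < (x : EReal) → (x : EReal) < b → f x ≠ ⊤
  top_outside : ∀ x : ℝ, ((x : EReal) < a ∨ b < (x : EReal)) → f x = ⊤
  at_one : f 1 = 0

/-- `Λ_f^P[g] = inf_{ν ∈ ℝ} {ν + E_P[f*(g - ν)]}`. -/
def LambdaF {Ω : Type*} [MeasurableSpace Ω] (f : ℝ → EReal) (P : Measure Ω) (g : Ω → ℝ) :
    EReal :=
  ⨅ ν : ℝ, ((ν : EReal) + eIntegral P (fun x => fstar f (g x - ν)))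

/-- The classical `f`-divergence `D_f(Q‖P) = E_P[f(dQ/dP)]` if `Q ≪ P`, else `∞`. -/
def fDivE {Ω : Type*} [MeasurableSpace Ω] (f : ℝ → EReal) (Q P : Measure Ω) : EReal :=
  if Q ≪ P then eIntegral P (fun x => f ((Q.rnDeriv P x).toReal)) else ⊤

/-- The `(f,Γ)`-divergence `D_f^Γ(Q‖P) = sup_{g ∈ Γ} {E_Q[g] - Λ_f^P[g]}`. -/
def fGammaDiv {Ω : Type*} [MeasurableSpace Ω] (f : ℝ → EReal) (Γ : Set (Ω → ℝ))
    (Q P : Measure Ω) : EReal :=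
  ⨆ g ∈ Γ, (((∫ x, g x ∂Q : ℝ) : EReal) - LambdaF f P g)

/-- The `Γ`-IPM `W^Γ(Q,P) = sup_{g ∈ Γ} {E_Q[g] - E_P[g]}`. -/
def ipmW {Ω : Type*} [MeasurableSpace Ω] (Γ : Set (Ω → ℝ)) (Q P : Measure Ω) : EReal :=
  ⨆ g ∈ Γ, (((∫ x, g x ∂Q : ℝ) : EReal) - ((∫ x, g x ∂P : ℝ) : EReal))

end

/-- A set `Ψ` of functions is `P(Ω)`-determining: if two probability measures give the
same integral to every `ψ ∈ Ψ`, then they are equal. -/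
def Determining {Ω : Type*} [MeasurableSpace Ω] (Ψ : Set (Ω → ℝ)) : Prop :=
  ∀ Q P : Measure Ω, IsProbabilityMeasure Q → IsProbabilityMeasure P →
    (∀ ψ ∈ Ψ, (∫ x, ψ x ∂Q) = ∫ x, ψ x ∂P) → Q = P


/-! Since `f 1 = 0`, `f*(y) ≥ y` for all `y`, and since `ν₀ = f'₊(1)` is a subgradient of `f` at
`1`, `f*(ν₀) = ν₀`. So `f* - id` has a minimum at `ν₀`, and differentiability there gives
`f*(ν₀ + t) ≤ ν₀ + t + o(t)`. Testing the divergence against `g = c₀ ± εψ ∈ Γ`, with the shift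
`ν = c₀ ± ε E_μ[ψ] - ν₀` in `Λ_f^μ[g]`, gives `D_f^Γ(ρ‖μ) ≥ ε |E_ρ[ψ] - E_μ[ψ]| - o(ε)` for all
probability measures `ρ, μ`; hence a vanishing divergence, in either order, forces
`E_{Q_n}[ψ] → E_P[ψ]`. -/

section EIntegral

variable {Ω : Type*} [MeasurableSpace Ω]

lemma posE_mono {x y : EReal} (h : x ≤ y) : posE x ≤ posE y := by
  unfold posE
  split_ifs with hx hy hy
  · exact le_rfl
  · exact absurd (top_le_iff.1 (hx ▸ h)) hy
  · exact le_top
  · by_cases hb : x = ⊥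
    · simp [hb]
    · exact ENNReal.ofReal_le_ofReal (EReal.toReal_le_toReal h hb hy)

lemma eIntegral_mono (μ : Measure Ω) {h₁ h₂ : Ω → EReal} (h : ∀ x, h₁ x ≤ h₂ x) :
    eIntegral μ h₁ ≤ eIntegral μ h₂ :=
  EReal.sub_le_sub
    (EReal.coe_ennreal_le_coe_ennreal_iff.2 (lintegral_mono fun x => posE_mono (h x)))
    (EReal.coe_ennreal_le_coe_ennreal_iff.2
      (lintegral_mono fun x => posE_mono (EReal.neg_le_neg_iff.2 (h x))))

lemma eIntegral_coe {μ : Measure Ω} {φ : Ω → ℝ} (hφ : Integrable φ μ) :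
    eIntegral μ (fun x => (φ x : EReal)) = ((∫ x, φ x ∂μ : ℝ) : EReal) := by
  have hpos : ∀ r : ℝ, posE r = ENNReal.ofReal r := fun r => by simp [posE]
  have hneg : ∫⁻ x, ENNReal.ofReal (-φ x) ∂μ ≠ ⊤ := hφ.neg.lintegral_lt_top.ne
  simp only [eIntegral, ← EReal.coe_neg, hpos, EReal.coe_sub,
    integral_eq_lintegral_pos_part_sub_lintegral_neg_part hφ,
    EReal.coe_ennreal_toReal hφ.lintegral_lt_top.ne, EReal.coe_ennreal_toReal hneg]

lemma eIntegral_le_integral {μ : Measure Ω} {h : Ω → EReal} {φ : Ω → ℝ} (hφ : Integrable φ μ)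
    (hle : ∀ x, h x ≤ φ x) : eIntegral μ h ≤ ((∫ x, φ x ∂μ : ℝ) : EReal) :=
  eIntegral_coe hφ ▸ eIntegral_mono μ hle

end EIntegral

lemma ConvexOn.add_mul_sub_le_of_hasDerivWithinAt_Ioi {S : Set ℝ} {F : ℝ → ℝ} {x₀ ν x : ℝ}
    (hF : ConvexOn ℝ S F) (hx₀ : x₀ ∈ S) (hS : S ∈ 𝓝[>] x₀)
    (hν : HasDerivWithinAt F ν (Ioi x₀) x₀) (hx : x ∈ S) : F x₀ + ν * (x - x₀) ≤ F x := by
  rcases lt_trichotomy x x₀ with hlt | rfl | hgt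
  · have hslope : slope F x₀ x ≤ ν := by
      refine ge_of_tendsto ((hasDerivWithinAt_iff_tendsto_slope' self_notMem_Ioi).1 hν) ?_
      filter_upwards [hS, self_mem_nhdsWithin] with s hs (hs' : x₀ < s)
      exact hF.slope_mono hx₀ ⟨hx, hlt.ne⟩ ⟨hs, hs'.ne'⟩ (hlt.trans hs').le
    rw [slope_def_field, div_le_iff_of_neg (sub_neg.2 hlt)] at hslope
    linarith
  · simp
  · have hslope := hF.le_slope_of_hasDerivWithinAt_Ioi hx₀ hx hgt hν
    rw [slope_def_field, le_div_iff₀ (sub_pos.2 hgt)] at hslope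
    linarith

lemma HasDerivAt.eventually_le_add_mul_abs {F : ℝ → ℝ} {F' y₀ η : ℝ} (hF : HasDerivAt F F' y₀)
    (hη : 0 < η) : ∀ᶠ y in 𝓝 y₀, F y ≤ F y₀ + F' * (y - y₀) + η * |y - y₀| := by
  filter_upwards [(hasDerivAt_iff_isLittleO.1 hF).def hη] with y hy
  rw [Real.norm_eq_abs, Real.norm_eq_abs, smul_eq_mul] at hy
  linarith [le_abs_self (F y - F y₀ - (y - y₀) * F')]

namespace IsF1

variable {a b : EReal} {f : ℝ → EReal}

lemma coe_toReal (hf : IsF1 a b f) {x : ℝ} (hx : f x ≠ ⊤) : ((f x).toReal : EReal) = f x :=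
  EReal.coe_toReal hx (hf.ne_bot x)

lemma convexOn_toReal (hf : IsF1 a b f) : ConvexOn ℝ {x | f x ≠ ⊤} fun x => (f x).toReal := by
  have hconv : ∀ ⦃x⦄, f x ≠ ⊤ → ∀ ⦃y⦄, f y ≠ ⊤ → ∀ ⦃t : ℝ⦄, 0 < t → t < 1 →
      f (t * x + (1 - t) * y) ≤ ((t * (f x).toReal + (1 - t) * (f y).toReal : ℝ) : EReal) := by
    intro x hx y hy t ht₀ ht₁
    rw [EReal.coe_add, EReal.coe_mul, EReal.coe_mul, hf.coe_toReal hx, hf.coe_toReal hy]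
    exact hf.convex x y t ht₀ ht₁
  refine convexOn_iff_forall_pos.2
    ⟨convex_iff_forall_pos.2 fun x hx y hy s t hs ht hst => ?_, fun x hx y hy s t hs ht hst => ?_⟩
  · obtain rfl : t = 1 - s := by linarith
    exact ne_top_of_le_ne_top (EReal.coe_ne_top _) (hconv hx hy hs (by linarith))
  · obtain rfl : t = 1 - s := by linarith
    simpa only [smul_eq_mul, EReal.toReal_coe] using
      EReal.toReal_le_toReal (hconv hx hy hs (by linarith)) (hf.ne_bot _) (EReal.coe_ne_top _)

lemma setOf_ne_top_mem_nhds_one (hf : IsF1 a b f) : {x : ℝ | f x ≠ ⊤} ∈ 𝓝 1 := by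
  filter_upwards [(isOpen_Ioo.preimage continuous_coe_real_ereal).mem_nhds
    ⟨hf.a_lt_one, hf.one_lt_b⟩] with x hx using hf.finite_on x hx.1 hx.2

lemma coe_mul_sub_one_le (hf : IsF1 a b f) {ν₀ : ℝ}
    (hν₀ : Tendsto (fun x : ℝ => (f x).toReal / (x - 1)) (𝓝[>] 1) (𝓝 ν₀)) (x : ℝ) :
    ((ν₀ * (x - 1) : ℝ) : EReal) ≤ f x := by
  by_cases hx : f x = ⊤
  · simp [hx]
  have hF₁ : (f 1).toReal = 0 := by simp [hf.at_one]
  have hderiv : HasDerivWithinAt (fun x => (f x).toReal) ν₀ (Ioi 1) 1 := by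
    refine (hasDerivWithinAt_iff_tendsto_slope' self_notMem_Ioi).2 (hν₀.congr fun y => ?_)
    simp [slope_def_field, hF₁]
  have := hf.convexOn_toReal.add_mul_sub_le_of_hasDerivWithinAt_Ioi (by simp [hf.at_one])
    (nhdsWithin_le_nhds hf.setOf_ne_top_mem_nhds_one) hderiv hx
  rw [← hf.coe_toReal hx]
  exact_mod_cast (by linarith : ν₀ * (x - 1) ≤ (f x).toReal)

end IsF1

section Legendre

variable {f : ℝ → EReal}

lemma coe_le_fstar (h₁ : f 1 = 0) (y : ℝ) : (y : EReal) ≤ fstar f y :=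
  le_iSup_of_le 1 (by simp [h₁])

lemma fstar_eq_of_forall_coe_mul_sub_one_le {ν : ℝ} (h₁ : f 1 = 0)
    (hsub : ∀ x, ((ν * (x - 1) : ℝ) : EReal) ≤ f x) : fstar f ν = ν := by
  refine le_antisymm (iSup_le fun x => ?_) (coe_le_fstar h₁ ν)
  calc ((x * ν : ℝ) : EReal) - f x ≤ ((x * ν : ℝ) : EReal) - ((ν * (x - 1) : ℝ) : EReal) :=
        EReal.sub_le_sub le_rfl (hsub x)
    _ = ν := by rw [← EReal.coe_sub]; ring_nf

lemma eventually_fstar_le {ν₀ : ℝ} (h₁ : f 1 = 0)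
    (hsub : ∀ x, ((ν₀ * (x - 1) : ℝ) : EReal) ≤ f x) (hfin : ∀ᶠ y in 𝓝 ν₀, fstar f y ≠ ⊤)
    (hd : DifferentiableAt ℝ (fun y => (fstar f y).toReal) ν₀) {η : ℝ} (hη : 0 < η) :
    ∀ᶠ y in 𝓝 ν₀, fstar f y ≤ ((y + η * |y - ν₀| : ℝ) : EReal) := by
  set F := fun y => (fstar f y).toReal
  have hcoe : ∀ y, fstar f y ≠ ⊤ → (F y : EReal) = fstar f y := fun y hy =>
    EReal.coe_toReal hy (ne_bot_of_le_ne_bot (EReal.coe_ne_bot y) (coe_le_fstar h₁ y))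
  have hF₀ : F ν₀ = ν₀ := by simp [F, fstar_eq_of_forall_coe_mul_sub_one_le h₁ hsub]
  have hmin : IsLocalMin (fun y => F y - y) ν₀ := hfin.mono fun y hy => by
    have : (y : EReal) ≤ F y := hcoe y hy ▸ coe_le_fstar h₁ y
    simp only [hF₀, sub_self, sub_nonneg]
    exact_mod_cast this
  have hderiv : HasDerivAt F 1 ν₀ := by
    have := hmin.hasDerivAt_eq_zero (hd.hasDerivAt.sub (hasDerivAt_id' ν₀))
    exact sub_eq_zero.1 this ▸ hd.hasDerivAt
  filter_upwards [hfin, hderiv.eventually_le_add_mul_abs hη] with y hfy hy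
  rw [hF₀, one_mul] at hy
  rw [← hcoe y hfy]
  exact_mod_cast (by linarith : F y ≤ y + η * |y - ν₀|)

end Legendre

section Divergence

variable {Ω : Type*} [MeasurableSpace Ω] {f : ℝ → EReal} {Γ : Set (Ω → ℝ)}

lemma LambdaF_le_integral_add {μ : Measure Ω} [IsProbabilityMeasure μ] {g : Ω → ℝ}
    (hg : Integrable g μ) {ν κ : ℝ} (h : ∀ x, fstar f (g x - ν) ≤ ((g x - ν + κ : ℝ) : EReal)) :
    LambdaF f μ g ≤ ((∫ x, g x ∂μ + κ : ℝ) : EReal) := by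
  have hint₁ : Integrable (fun x => g x - ν) μ := hg.sub (integrable_const ν)
  have hint : Integrable (fun x => g x - ν + κ) μ := hint₁.add (integrable_const κ)
  calc LambdaF f μ g ≤ ν + eIntegral μ (fun x => fstar f (g x - ν)) := iInf_le _ ν
    _ ≤ ν + ((∫ x, (g x - ν + κ) ∂μ : ℝ) : EReal) :=
        add_le_add_right (eIntegral_le_integral hint h) _
    _ = ((∫ x, g x ∂μ + κ : ℝ) : EReal) := by
        rw [integral_add hint₁ (integrable_const κ), integral_sub hg (integrable_const ν)]
        simp only [integral_const, probReal_univ, one_smul]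
        norm_cast
        ring

lemma integral_sub_integral_sub_le_fGammaDiv {g : Ω → ℝ} (hg : g ∈ Γ) (ρ : Measure Ω)
    {μ : Measure Ω} [IsProbabilityMeasure μ] (hgμ : Integrable g μ) {ν κ : ℝ}
    (h : ∀ x, fstar f (g x - ν) ≤ ((g x - ν + κ : ℝ) : EReal)) :
    ((∫ x, g x ∂ρ - ∫ x, g x ∂μ - κ : ℝ) : EReal) ≤ fGammaDiv f Γ ρ μ :=
  calc ((∫ x, g x ∂ρ - ∫ x, g x ∂μ - κ : ℝ) : EReal)
      = ((∫ x, g x ∂ρ : ℝ) : EReal) - ((∫ x, g x ∂μ + κ : ℝ) : EReal) := by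
        rw [← EReal.coe_sub, sub_add_eq_sub_sub]
    _ ≤ ((∫ x, g x ∂ρ : ℝ) : EReal) - LambdaF f μ g :=
        EReal.sub_le_sub le_rfl (LambdaF_le_integral_add hgμ h)
    _ ≤ fGammaDiv f Γ ρ μ :=
        le_iSup₂ (f := fun g (_ : g ∈ Γ) => ((∫ x, g x ∂ρ : ℝ) : EReal) - LambdaF f μ g) g hg

lemma mul_integral_sub_sub_le_fGammaDiv {ψ : Ω → ℝ} {C c s ν₀ κ : ℝ} (hψ : Measurable ψ)
    (hC : ∀ x, |ψ x| ≤ C) (hs : (fun x => c + s * ψ x) ∈ Γ)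
    (hloc : ∀ t, |t| ≤ |s| * (2 * C) → fstar f (ν₀ + t) ≤ ((ν₀ + t + κ : ℝ) : EReal))
    (ρ μ : Measure Ω) [IsProbabilityMeasure ρ] [IsProbabilityMeasure μ] :
    ((s * (∫ x, ψ x ∂ρ - ∫ x, ψ x ∂μ) - κ : ℝ) : EReal) ≤ fGammaDiv f Γ ρ μ := by
  have hC' : ∀ x, ‖ψ x‖ ≤ C := hC
  have hint : ∀ (ρ : Measure Ω) [IsFiniteMeasure ρ], Integrable ψ ρ := fun ρ _ =>
    .of_bound hψ.aestronglyMeasurable C (ae_of_all _ hC')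
  have hg : ∀ (ρ : Measure Ω) [IsProbabilityMeasure ρ],
      ∫ x, c + s * ψ x ∂ρ = c + s * ∫ x, ψ x ∂ρ := fun ρ _ => by
    rw [integral_add (integrable_const c) ((hint ρ).const_mul s), integral_const,
      integral_const_mul, probReal_univ, one_smul]
  set m := ∫ x, ψ x ∂μ
  have hm : |m| ≤ C := by
    simpa using norm_integral_le_of_norm_le_const (μ := μ) (ae_of_all _ hC')
  -- the centring `ν = c + s m - ν₀` puts every argument of `f*` within `|s| 2C` of `ν₀`
  have key := integral_sub_integral_sub_le_fGammaDiv hs ρ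
    ((integrable_const c).add ((hint μ).const_mul s)) (ν := c + s * m - ν₀) (κ := κ) fun x => by
    have hx : |s * (ψ x - m)| ≤ |s| * (2 * C) := by
      rw [abs_mul]
      gcongr
      linarith [abs_sub (ψ x) m, hC x]
    convert hloc _ hx using 2 <;> ring_nf
  rwa [hg, hg, show c + s * ∫ x, ψ x ∂ρ - (c + s * m) = s * (∫ x, ψ x ∂ρ - m) by ring] at key

lemma exists_pos_mul_abs_sub_le_fGammaDiv {ψ : Ω → ℝ} {C ν₀ c ε₀ : ℝ} (hψ : Measurable ψ)
    (hC : ∀ x, |ψ x| ≤ C) (hε₀ : 0 < ε₀) (hpert : ∀ ε, |ε| < ε₀ → (fun x => c + ε * ψ x) ∈ Γ)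
    (hloc : ∀ η > 0, ∀ᶠ y in 𝓝 ν₀, fstar f y ≤ ((y + η * |y - ν₀| : ℝ) : EReal))
    {η : ℝ} (hη : 0 < η) :
    ∃ ε > 0, ∀ ρ μ : Measure Ω, IsProbabilityMeasure ρ → IsProbabilityMeasure μ →
      ((ε * (|∫ x, ψ x ∂ρ - ∫ x, ψ x ∂μ| - η) : ℝ) : EReal) ≤ fGammaDiv f Γ ρ μ := by
  set L := 2 * max C 1
  have hL : 0 < L := by positivity
  obtain ⟨δ, hδ, hδloc⟩ := Metric.eventually_nhds_iff.1 (hloc (η / L) (by positivity))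
  set ε := min (ε₀ / 2) (δ / (2 * L))
  have hε : 0 < ε := by positivity
  have hεε₀ : ε < ε₀ := (min_le_left _ _).trans_lt (half_lt_self hε₀)
  have hεL : ε * L < δ := by
    calc ε * L ≤ δ / (2 * L) * L := by gcongr; exact min_le_right _ _
      _ < δ := by field_simp; linarith
  have hbound : ∀ t, |t| ≤ ε * L → fstar f (ν₀ + t) ≤ ((ν₀ + t + ε * η : ℝ) : EReal) := by
    intro t ht
    have hdist : dist (ν₀ + t) ν₀ < δ := by
      rw [Real.dist_eq, add_sub_cancel_left]
      exact ht.trans_lt hεL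
    have hη_t : η / L * |t| ≤ ε * η :=
      calc η / L * |t| ≤ η / L * (ε * L) := by gcongr
        _ = ε * η := by field_simp
    refine (hδloc hdist).trans ?_
    rw [add_sub_cancel_left, EReal.coe_le_coe_iff]
    linarith
  refine ⟨ε, hε, fun ρ μ _ _ => ?_⟩
  have one_sided : ∀ s, |s| = ε →
      ((s * (∫ x, ψ x ∂ρ - ∫ x, ψ x ∂μ) - ε * η : ℝ) : EReal) ≤ fGammaDiv f Γ ρ μ :=
    fun s hs => mul_integral_sub_sub_le_fGammaDiv hψ hC (hpert s (hs ▸ hεε₀))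
      (fun t ht => hbound t (ht.trans (hs ▸ by gcongr; linarith [le_max_left C 1]))) ρ μ
  rcases abs_cases (∫ x, ψ x ∂ρ - ∫ x, ψ x ∂μ) with ⟨habs, -⟩ | ⟨habs, -⟩
  · simpa only [habs, mul_sub] using one_sided ε (abs_of_pos hε)
  · convert one_sided (-ε) (by rw [abs_neg, abs_of_pos hε]) using 2
    rw [habs]
    ring

lemma tendsto_of_forall_exists_mul_sub_le {α : Type*} {l : Filter α} {u : α → ℝ} {D : α → EReal}
    {m : ℝ} (hD : Tendsto D l (𝓝 0))
    (h : ∀ η > 0, ∃ ε > 0, ∀ n, ((ε * (|u n - m| - η) : ℝ) : EReal) ≤ D n) :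
    Tendsto u l (𝓝 m) := by
  refine Metric.tendsto_nhds.2 fun r hr => ?_
  obtain ⟨ε, hε, hεD⟩ := h (r / 2) (half_pos hr)
  have hpos : (0 : EReal) < ((ε * (r / 2) : ℝ) : EReal) := by exact_mod_cast by positivity
  filter_upwards [hD.eventually_lt_const hpos] with n hn
  have := lt_of_mul_lt_mul_left (EReal.coe_lt_coe_iff.1 ((hεD n).trans_lt hn)) hε.le
  rw [Real.dist_eq]
  linarith

end Divergence

theorem stmt14_general {Ω : Type*} [MeasurableSpace Ω] (a b : EReal) (f : ℝ → EReal)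
    (hf : IsF1 a b f)
    (Γ : Set (Ω → ℝ)) (hΓ : Γ ⊆ Mb Ω)
    -- (a) a nonempty `P(Ω)`-determining set `Ψ ⊆ Γ`, stable under small affine perturbations
    (Ψ : Set (Ω → ℝ)) (hΨΓ : Ψ ⊆ Γ)
    (hpert : ∀ ψ ∈ Ψ, ∃ c₀ ε₀ : ℝ, 0 < ε₀ ∧
      ∀ ε : ℝ, |ε| < ε₀ → (fun x => c₀ + ε * ψ x) ∈ Γ)
    -- (c) `f*` is finite and `C¹` on a neighborhood of `ν₀ := f'₊(1)`
    (ν₀ : ℝ)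
    (hν₀ : Filter.Tendsto (fun x : ℝ => (f x).toReal / (x - 1)) (𝓝[>] (1 : ℝ)) (𝓝 ν₀))
    (hc : ∃ δ : ℝ, 0 < δ ∧ (∀ y : ℝ, |y - ν₀| < δ → fstar f y ≠ ⊤) ∧
      ContDiffOn ℝ 1 (fun y => (fstar f y).toReal) (Metric.ball ν₀ δ))
    (P : Measure Ω) [IsProbabilityMeasure P]
    (Q : ℕ → Measure Ω) (hQ : ∀ n, IsProbabilityMeasure (Q n))
    (hconv : Filter.Tendsto (fun n => fGammaDiv f Γ (Q n) P) Filter.atTop (𝓝 0)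
      ∨ Filter.Tendsto (fun n => fGammaDiv f Γ P (Q n)) Filter.atTop (𝓝 0)) :
    ∀ ψ ∈ Ψ, Filter.Tendsto (fun n => ∫ x, ψ x ∂(Q n)) Filter.atTop
      (𝓝 (∫ x, ψ x ∂P)) := by
  obtain ⟨δ, hδ, hfin, hC1⟩ := hc
  have hloc : ∀ η > 0, ∀ᶠ y in 𝓝 ν₀, fstar f y ≤ ((y + η * |y - ν₀| : ℝ) : EReal) :=
    fun η hη => eventually_fstar_le hf.at_one (hf.coe_mul_sub_one_le hν₀)
      (Metric.eventually_nhds_iff.2 ⟨δ, hδ, fun y hy => hfin y (Real.dist_eq y ν₀ ▸ hy)⟩)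
      ((hC1.differentiableOn one_ne_zero ν₀ (Metric.mem_ball_self hδ)).differentiableAt
        (Metric.ball_mem_nhds ν₀ hδ)) hη
  intro ψ hψ
  obtain ⟨hψm, C, hC⟩ := hΓ (hΨΓ hψ)
  obtain ⟨c₀, ε₀, hε₀, hpertψ⟩ := hpert ψ hψ
  have key := fun η (hη : 0 < η) => exists_pos_mul_abs_sub_le_fGammaDiv hψm hC hε₀ hpertψ hloc hη
  rcases hconv with hD | hD
  · refine tendsto_of_forall_exists_mul_sub_le hD fun η hη => ?_
    obtain ⟨ε, hε, h⟩ := key η hη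
    exact ⟨ε, hε, fun n => h (Q n) P (hQ n) inferInstance⟩
  · refine tendsto_of_forall_exists_mul_sub_le hD fun η hη => ?_
    obtain ⟨ε, hε, h⟩ := key η hη
    exact ⟨ε, hε, fun n => abs_sub_comm (∫ x, ψ x ∂P) _ ▸ h P (Q n) inferInstance (hQ n)⟩

/-- Under assumptions (a)-(c), if `D_f^Γ(Q_n‖P) → 0` or
`D_f^Γ(P‖Q_n) → 0` then `E_{Q_n}[ψ] → E_P[ψ]` for every `ψ ∈ Ψ`. -/
theorem stmt14 {Ω : Type*} [MeasurableSpace Ω] (a b : EReal) (f : ℝ → EReal)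
    (hf : IsF1 a b f)
    (Γ : Set (Ω → ℝ)) (hΓ : Γ ⊆ Mb Ω) (hne : Γ.Nonempty)
    -- (a) a nonempty `P(Ω)`-determining set `Ψ ⊆ Γ`, stable under small affine perturbations
    (Ψ : Set (Ω → ℝ)) (hΨne : Ψ.Nonempty) (hΨΓ : Ψ ⊆ Γ) (hdet : Determining Ψ)
    (hpert : ∀ ψ ∈ Ψ, ∃ c₀ ε₀ : ℝ, 0 < ε₀ ∧
      ∀ ε : ℝ, |ε| < ε₀ → (fun x => c₀ + ε * ψ x) ∈ Γ)
    -- (b) `f` is strictly convex on a neighborhood of `1`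
    (hb : ∃ δ : ℝ, 0 < δ ∧ ∀ x y t : ℝ, |x - 1| < δ → |y - 1| < δ → x ≠ y → 0 < t → t < 1 →
      f (t * x + (1 - t) * y) < ((t : ℝ) : EReal) * f x + (((1 - t : ℝ)) : EReal) * f y)
    -- (c) `f*` is finite and `C¹` on a neighborhood of `ν₀ := f'₊(1)`
    (ν₀ : ℝ)
    (hν₀ : Filter.Tendsto (fun x : ℝ => (f x).toReal / (x - 1)) (𝓝[>] (1 : ℝ)) (𝓝 ν₀))
    (hc : ∃ δ : ℝ, 0 < δ ∧ (∀ y : ℝ, |y - ν₀| < δ → fstar f y ≠ ⊤) ∧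
      ContDiffOn ℝ 1 (fun y => (fstar f y).toReal) (Metric.ball ν₀ δ))
    (P : Measure Ω) [IsProbabilityMeasure P]
    (Q : ℕ → Measure Ω) (hQ : ∀ n, IsProbabilityMeasure (Q n))
    (hconv : Filter.Tendsto (fun n => fGammaDiv f Γ (Q n) P) Filter.atTop (𝓝 0)
      ∨ Filter.Tendsto (fun n => fGammaDiv f Γ P (Q n)) Filter.atTop (𝓝 0)) :
    ∀ ψ ∈ Ψ, Filter.Tendsto (fun n => ∫ x, ψ x ∂(Q n)) Filter.atTop
      (𝓝 (∫ x, ψ x ∂P)) :=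
  stmt14_general a b f hf Γ hΓ Ψ hΨΓ hpert ν₀ hν₀ hc P Q hQ hconv
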